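/- arXiv:2305.19665 — 3 statements merged into one kernel-verified Lean document; each statement's English description precedes it below -/
import Mathlib

section
/- Let (r_1,...,r_d, s_1,...,s_{d'}) ∈ G_{I,σ} for (I,σ) ∈ W_d. If j ∈ J_σ := {j ∈ [d'−1] : σ^{-1}(j) < σ^{-1}(j+1)} then s_j > 0, and if j ∈ [d'−1] ∖ J_σ then s_j = 0. -/
open scoped Classical

namespace FreeNilpotent

/-- `d' = binom(d,2)`, the rank of the derived subalgebra of `f_{2,d}`. -/
def d' (d : ℕ) : ℕ := d * (d - 1) / 2

/-- The indexing bijection `b` on pairs: `b(i,j) = d' + j − 1 + (i−1)(2d−2−i)/2`. -/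
def bmap (d i j : ℕ) : ℕ := d' d + j - 1 + (i - 1) * (2 * d - 2 - i) / 2

/-- The set of pairs `(i,j)` with `1 ≤ i < j ≤ d`. -/
def pairs (d : ℕ) : Finset (ℕ × ℕ) :=
  (Finset.Icc 1 d ×ˢ Finset.Icc 1 d).filter fun p => p.1 < p.2

/-- The corresponding tuple `v_i ∈ ℕ₀^{d+d'}` (1-based coordinates `l`):
for `i ∈ [d']`, `v_i = (0^{d+i−1}, 1^{d'−i+1})`; for `i = b(j,k)` with `j < k ≤ d`,
`v_i = (0^{j−1}, 1^{k−j}, 2^{d−k+1}, 0^{d'})`. -/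
def v (d i l : ℕ) : ℕ :=
  if i ≤ d' d then (if d + i ≤ l ∧ l ≤ d + d' d then 1 else 0)
  else ∑ p ∈ (pairs d).filter (fun p => bmap d p.1 p.2 = i),
    ((if p.1 ≤ l ∧ l ≤ d then 1 else 0) + (if p.2 ≤ l ∧ l ≤ d then 1 else 0))

/-- `σ : ℕ → ℕ` is (the one-line form of) a permutation of `[2d'] = {1, …, 2d'}`. -/
def IsPermOn (d : ℕ) (σ : ℕ → ℕ) : Prop :=
  Set.BijOn σ (Set.Icc 1 (2 * d' d)) (Set.Icc 1 (2 * d' d))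

/-- Membership in the set `𝒮_{2d'}` of permutations. -/
def memS (d : ℕ) (σ : ℕ → ℕ) : Prop :=
  IsPermOn d σ ∧
  (∀ i ∈ Finset.Icc 1 (2 * d' d),
    ((Finset.Icc 1 i).filter fun l => σ l ≤ d' d).card ≤
      ((Finset.Icc 1 i).filter fun l => d' d < σ l).card) ∧
  (∀ i j, 1 ≤ i → i < j → j ≤ 2 * d' d → σ i ≤ d' d → σ j ≤ d' d → σ j < σ i →
    ∀ k, i ≤ k → k < j → σ (k + 1) < σ k)

/-- The linear form `∑_j w^σ_{i,j} r_j + ∑_j w^σ_{i,d+j} s_j` with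
`w^σ_{i,·} = v_{σ(i)} − v_{σ(i+1)}`. -/
def wform (d : ℕ) (σ : ℕ → ℕ) (i : ℕ) (r s : ℕ → ℕ) : ℤ :=
  (∑ j ∈ Finset.Icc 1 d, ((v d (σ i) j : ℤ) - (v d (σ (i + 1)) j : ℤ)) * (r j : ℤ)) +
    ∑ j ∈ Finset.Icc 1 (d' d),
      ((v d (σ i) (d + j) : ℤ) - (v d (σ (i + 1)) (d + j) : ℤ)) * (s j : ℤ)

/-- Membership of a tuple `(r,s) ∈ ℕ₀^{d+d'}` (encoded as functions with
`r` supported on `[d]` and `s` on `[d']`) in the set `G_{I,σ}`. -/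
def memG (d : ℕ) (I : Finset ℕ) (σ : ℕ → ℕ) (r s : ℕ → ℕ) : Prop :=
  (∀ i ∈ I, 0 < r i) ∧
  (∀ i, 1 ≤ i → i ≤ d - 1 → i ∉ I → r i = 0) ∧
  (∀ i, 1 ≤ i → i ≤ 2 * d' d - 1 → σ i < σ (i + 1) → 0 < wform d σ i r s) ∧
  (∀ i, 1 ≤ i → i ≤ 2 * d' d - 1 → σ (i + 1) < σ i → 0 ≤ wform d σ i r s) ∧
  (∀ j, d < j → r j = 0) ∧ (∀ j, d' d < j → s j = 0)

/-- Membership of `(I,σ)` in the set `𝒲_d`: `I ⊆ [d−1]`, `σ ∈ 𝒮_{2d'}`, and the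
associated system has nonzero solutions (equivalently, `G_{I,σ}` is nonempty). -/
def memW (d : ℕ) (I : Finset ℕ) (σ : ℕ → ℕ) : Prop :=
  I ⊆ Finset.Icc 1 (d - 1) ∧ memS d σ ∧ ∃ r s, memG d I σ r s

/-- `j ∈ J_σ`, i.e. `σ^{-1}(j) < σ^{-1}(j+1)`. -/
def Jmem (d : ℕ) (σ : ℕ → ℕ) (j : ℕ) : Prop :=
  Function.invFunOn σ (Set.Icc 1 (2 * d' d)) j <
    Function.invFunOn σ (Set.Icc 1 (2 * d' d)) (j + 1)

/-
`wform d σ i` is the difference of the pairings of `(r,s)` with `v_{σ i}` and `v_{σ (i+1)}`, so its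
sums over intervals of positions telescope, and for `x ≤ d'` that pairing is `∑_{l ≥ x} s_l`. Hence
`s_j` is the sum of the forms between the positions of `j` and `j + 1` in `σ`, with the sign flipped
when `j + 1` comes first. All forms are nonnegative on `G_{I,σ}`; when `j` comes first, the values of
`σ` climb from `j` to `j + 1` in between, so some ascent contributes a strictly positive form.
-/

/-- The pairing `⟪v_x, (r,s)⟫`. -/
def vDot (d x : ℕ) (r s : ℕ → ℕ) : ℤ :=
  (∑ l ∈ Finset.Icc 1 d, (v d x l : ℤ) * r l) +
    ∑ l ∈ Finset.Icc 1 (d' d), (v d x (d + l) : ℤ) * s l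

lemma wform_eq_vDot_sub (d : ℕ) (σ : ℕ → ℕ) (i : ℕ) (r s : ℕ → ℕ) :
    wform d σ i r s = vDot d (σ i) r s - vDot d (σ (i + 1)) r s := by
  simp only [wform, vDot, sub_mul, Finset.sum_sub_distrib]
  ring

lemma sum_Ico_wform (d : ℕ) (σ : ℕ → ℕ) (r s : ℕ → ℕ) {a b : ℕ} (hab : a ≤ b) :
    ∑ i ∈ Finset.Ico a b, wform d σ i r s = vDot d (σ a) r s - vDot d (σ b) r s := by
  rw [← neg_sub, ← Finset.sum_Ico_sub (fun i => vDot d (σ i) r s) hab, ← Finset.sum_neg_distrib]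
  exact Finset.sum_congr rfl fun i _ => by rw [wform_eq_vDot_sub, neg_sub]

lemma v_of_le_d' {d x : ℕ} (hx : x ≤ d' d) (l : ℕ) :
    v d x l = if d + x ≤ l ∧ l ≤ d + d' d then 1 else 0 := by
  rw [v, if_pos hx]

lemma vDot_of_le_d' {d x : ℕ} (hx1 : 1 ≤ x) (hx : x ≤ d' d) (r s : ℕ → ℕ) :
    vDot d x r s = ∑ l ∈ Finset.Icc x (d' d), (s l : ℤ) := by
  have hr : ∑ l ∈ Finset.Icc 1 d, (v d x l : ℤ) * r l = 0 :=
    Finset.sum_eq_zero fun l hl => by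
      rw [Finset.mem_Icc] at hl
      simp [v_of_le_d' hx, show ¬d + x ≤ l by omega]
  have hs : ∀ l ∈ Finset.Icc 1 (d' d),
      (v d x (d + l) : ℤ) * s l = if x ≤ l then (s l : ℤ) else 0 := fun l hl => by
    rw [Finset.mem_Icc] at hl
    by_cases h : x ≤ l
    · simp [v_of_le_d' hx, h, hl.2]
    · simp [v_of_le_d' hx, h]
  rw [vDot, hr, Finset.sum_congr rfl hs, zero_add, ← Finset.sum_filter]
  congr 1
  ext l
  simp only [Finset.mem_filter, Finset.mem_Icc]
  omega

lemma vDot_sub_vDot_succ {d j : ℕ} (hj1 : 1 ≤ j) (hj : j + 1 ≤ d' d) (r s : ℕ → ℕ) :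
    vDot d j r s - vDot d (j + 1) r s = s j := by
  rw [vDot_of_le_d' hj1 (by omega), vDot_of_le_d' (by omega) hj, Finset.Icc_add_one_left_eq_Ioc,
    Finset.Icc_eq_cons_Ioc (by omega : j ≤ d' d), Finset.sum_cons]
  ring

lemma exists_mem_Ico_lt_succ_of_lt {α : Type*} [LinearOrder α] (f : ℕ → α) {a b : ℕ}
    (hab : a ≤ b) (h : f a < f b) : ∃ i ∈ Finset.Ico a b, f i < f (i + 1) := by
  induction b, hab using Nat.le_induction with
  | base => exact absurd h (lt_irrefl _)
  | succ b hab ih =>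
    by_cases hb : f b < f (b + 1)
    · exact ⟨b, Finset.mem_Ico.mpr ⟨hab, by omega⟩, hb⟩
    · obtain ⟨i, hi, hi'⟩ := ih (h.trans_le (not_lt.mp hb))
      exact ⟨i, Finset.Ico_subset_Ico_right (by omega) hi, hi'⟩

lemma wform_nonneg {d : ℕ} {I : Finset ℕ} {σ : ℕ → ℕ} {r s : ℕ → ℕ} (hσ : IsPermOn d σ)
    (hG : memG d I σ r s) {i : ℕ} (hi1 : 1 ≤ i) (hi2 : i < 2 * d' d) :
    0 ≤ wform d σ i r s := by
  have hne : σ i ≠ σ (i + 1) := fun h => by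
    have := hσ.injOn ⟨hi1, hi2.le⟩ ⟨by omega, by omega⟩ h
    omega
  rcases hne.lt_or_gt with hlt | hgt
  · exact (hG.2.2.1 i hi1 (by omega) hlt).le
  · exact hG.2.2.2.1 i hi1 (by omega) hgt

theorem sj_pos_iff_Jsigma_general (d : ℕ) (I : Finset ℕ) (σ : ℕ → ℕ)
    (hW : memW d I σ) (r s : ℕ → ℕ) (hG : memG d I σ r s)
    (j : ℕ) (hj1 : 1 ≤ j) (hj2 : j ≤ d' d - 1) :
    (Jmem d σ j → 0 < s j) ∧ (¬ Jmem d σ j → s j = 0) := by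
  obtain ⟨-, ⟨hσ, -⟩, -⟩ := hW
  have hj : j + 1 ≤ d' d := by omega
  have hinv : ∀ x ∈ Set.Icc 1 (2 * d' d), Function.invFunOn σ (Set.Icc 1 (2 * d' d)) x ∈
      Set.Icc 1 (2 * d' d) ∧ σ (Function.invFunOn σ (Set.Icc 1 (2 * d' d)) x) = x :=
    fun x hx => ⟨hσ.surjOn.mapsTo_invFunOn hx, hσ.surjOn.rightInvOn_invFunOn hx⟩
  obtain ⟨⟨hp1, hp2⟩, hσp⟩ := hinv j ⟨hj1, by omega⟩
  obtain ⟨⟨hq1, hq2⟩, hσq⟩ := hinv (j + 1) ⟨by omega, by omega⟩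
  unfold Jmem
  generalize Function.invFunOn σ (Set.Icc 1 (2 * d' d)) j = p at *
  generalize Function.invFunOn σ (Set.Icc 1 (2 * d' d)) (j + 1) = q at *
  have hsj : vDot d (σ p) r s - vDot d (σ q) r s = s j := by
    rw [hσp, hσq, vDot_sub_vDot_succ hj1 hj]
  have hsum_nonneg : ∀ {a b : ℕ}, 1 ≤ a → b ≤ 2 * d' d →
      ∀ i ∈ Finset.Ico a b, 0 ≤ wform d σ i r s := fun ha hb i hi => by
    rw [Finset.mem_Ico] at hi
    exact wform_nonneg hσ hG (by omega) (by omega)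
  constructor
  · intro hpq
    obtain ⟨i, hi, hasc⟩ := exists_mem_Ico_lt_succ_of_lt σ hpq.le (by omega)
    have hi' := Finset.mem_Ico.mp hi
    have hpos := Finset.sum_pos' (hsum_nonneg hp1 hq2)
      ⟨i, hi, hG.2.2.1 i (by omega) (by omega) hasc⟩
    rw [sum_Ico_wform d σ r s hpq.le] at hpos
    omega
  · intro hqp
    have hnonneg := Finset.sum_nonneg (hsum_nonneg hq1 hp2)
    rw [sum_Ico_wform d σ r s (not_lt.mp hqp)] at hnonneg
    omega

/-- for `(I,σ) ∈ 𝒲_d` and `(r,s) ∈ G_{I,σ}`, if `j ∈ J_σ` then `s_j > 0`,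
and if `j ∈ [d'−1] ∖ J_σ` then `s_j = 0`. -/
theorem sj_pos_iff_Jsigma (d : ℕ) (hd : 2 ≤ d) (I : Finset ℕ) (σ : ℕ → ℕ)
    (hW : memW d I σ) (r s : ℕ → ℕ) (hG : memG d I σ r s)
    (j : ℕ) (hj1 : 1 ≤ j) (hj2 : j ≤ d' d - 1) :
    (Jmem d σ j → 0 < s j) ∧ (¬ Jmem d σ j → s j = 0) :=
  sj_pos_iff_Jsigma_general d I σ hW r s hG j hj1 hj2

end FreeNilpotent
end

section
/- For partitions λ with at most d parts and ν with at most d' parts such that ν ≤ μ_λ, let σ = σ_{λ,ν} and let m_1 ≥ ... ≥ m_{2d'} be the weakly decreasing rearrangement of the multiset μ_λ ∪ ν. Then for each i ∈ [2d'], m_i = ∑_{j=1}^{d} v_{σ(i),j} r_j + ∑_{j=1}^{d'} v_{σ(i),d+j} s_j, where r_j = λ_j − λ_{j+1} (r_d = λ_d) and s_j = ν_j − ν_{j+1} (s_{d'} = ν_{d'}). -/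
open scoped Classical

namespace FreeNilpotent

/-- `f` encodes a partition with at most `n` parts, written `f 1 ≥ f 2 ≥ … ≥ f n`
(1-based) with `f i = 0` for `i > n`. -/
def IsPart (n : ℕ) (f : ℕ → ℕ) : Prop :=
  (∀ i j, 1 ≤ i → i ≤ j → f j ≤ f i) ∧ ∀ i, n < i → f i = 0

/-- The multiset `{λ_i + λ_j : 1 ≤ i < j ≤ d}` of pairwise sums of parts of `λ`. -/
def Mpair (d : ℕ) (lam : ℕ → ℕ) : Multiset ℕ :=
  (pairs d).val.map fun p => lam p.1 + lam p.2

/-- The value attached to an index `a ∈ [2d']`: `ν_a` for `a ∈ [d']` and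
`λ_j + λ_k` for `a = b(j,k) ∈ d' + [d']`. -/
def Tval (d : ℕ) (lam nu : ℕ → ℕ) (a : ℕ) : ℕ :=
  if a ≤ d' d then nu a
  else ∑ p ∈ (pairs d).filter (fun p => bmap d p.1 p.2 = a), (lam p.1 + lam p.2)

/-- `σ` is the sorting permutation `σ_{λ,ν}`: it lists the indices of the multiset
`{λ_i+λ_j}_{i<j} ∪ {ν_k}` in weakly decreasing order of values, breaking ties by
larger `b`-index first. -/
def IsSorting (d : ℕ) (lam nu : ℕ → ℕ) (σ : ℕ → ℕ) : Prop :=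
  IsPermOn d σ ∧ ∀ i j, 1 ≤ i → i < j → j ≤ 2 * d' d →
    Tval d lam nu (σ j) < Tval d lam nu (σ i) ∨
      (Tval d lam nu (σ i) = Tval d lam nu (σ j) ∧ σ j < σ i)

private def Sf (d n : ℕ) : ℕ := ∑ x ∈ Finset.range n, (d - 2 - x)

lemma two_mul_d' (d : ℕ) (hd : 1 ≤ d) : 2 * d' d = d * (d - 1) := by
  have h : Even (d * (d - 1)) := by
    have h2 := Nat.even_mul_succ_self (d - 1)
    rw [Nat.sub_add_cancel hd] at h2
    rwa [Nat.mul_comm]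
  unfold d'
  exact Nat.mul_div_cancel' h.two_dvd

lemma Sf_mono (d : ℕ) {a b : ℕ} (h : a ≤ b) : Sf d a ≤ Sf d b :=
  Finset.sum_le_sum_of_subset (Finset.range_subset_range.mpr h)

lemma Sf_succ (d n : ℕ) : Sf d (n + 1) = Sf d n + (d - 2 - n) := by
  simp [Sf, Finset.sum_range_succ]

lemma two_mul_Sf (d : ℕ) : ∀ n, n + 1 ≤ d → 2 * Sf d n = n * (2 * d - 3 - n) := by
  intro n
  induction n with
  | zero => intro _; simp [Sf]
  | succ n ih =>
    intro h
    have hih := ih (by omega)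
    have e1 : 2 * d - 3 - n = (2 * d - 4 - n) + 1 := by omega
    have e2 : 2 * d - 3 - (n + 1) = 2 * d - 4 - n := by omega
    rw [Sf_succ, e2, add_one_mul]
    rw [e1, Nat.mul_add, Nat.mul_one] at hih
    set s := Sf d n
    set t := n * (2 * d - 4 - n) with ht
    omega

lemma bmap_eq (d i j : ℕ) (h1 : 1 ≤ i) (h2 : i < j) (h3 : j ≤ d) :
    bmap d i j = d' d + (j - 1) + Sf d (i - 1) := by
  have h := two_mul_Sf d (i - 1) (by omega)
  have e : 2 * d - 3 - (i - 1) = 2 * d - 2 - i := by omega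
  rw [e] at h
  unfold bmap
  have hq : (i - 1) * (2 * d - 2 - i) / 2 = Sf d (i - 1) := by
    set t := (i - 1) * (2 * d - 2 - i)
    omega
  rw [hq]
  omega

lemma bmap_lt (d : ℕ) {i j i' j' : ℕ} (hi : 1 ≤ i) (hij : i < j) (hjd : j ≤ d)
    (hi' : 1 ≤ i') (hij' : i' < j') (hjd' : j' ≤ d)
    (hlex : i < i' ∨ (i = i' ∧ j < j')) : bmap d i j < bmap d i' j' := by
  rw [bmap_eq d i j hi hij hjd, bmap_eq d i' j' hi' hij' hjd']
  rcases hlex with h | ⟨rfl, h⟩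
  · have hstep := Sf_succ d (i - 1)
    have hmono : Sf d (i - 1 + 1) ≤ Sf d (i' - 1) := Sf_mono d (by omega)
    omega
  · omega

lemma bmap_mem (d : ℕ) (hd : 2 ≤ d) {i j : ℕ} (hi : 1 ≤ i) (hij : i < j) (hjd : j ≤ d) :
    bmap d i j ∈ Finset.Icc (d' d + 1) (2 * d' d) := by
  rw [Finset.mem_Icc, bmap_eq d i j hi hij hjd]
  have h2d := two_mul_d' d (by omega)
  have hSmax := two_mul_Sf d (d - 2) (by omega)
  have e : 2 * d - 3 - (d - 2) = d - 1 := by omega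
  rw [e] at hSmax
  have hmul : (d - 2) * (d - 1) + 2 * (d - 1) = d * (d - 1) := by
    have e2 : (d - 2) + 2 = d := by omega
    calc (d - 2) * (d - 1) + 2 * (d - 1) = ((d - 2) + 2) * (d - 1) := by rw [Nat.add_mul]
    _ = d * (d - 1) := by rw [e2]
  have hmono : Sf d (i - 1) ≤ Sf d (d - 2) := Sf_mono d (by omega)
  set A := (d - 2) * (d - 1)
  set B := d * (d - 1)
  omega

lemma mem_pairs (d : ℕ) {p : ℕ × ℕ} :
    p ∈ pairs d ↔ 1 ≤ p.1 ∧ p.1 < p.2 ∧ p.2 ≤ d := by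
  simp only [pairs, Finset.mem_filter, Finset.mem_product, Finset.mem_Icc]
  omega

lemma bmap_injOn (d : ℕ) : ∀ p ∈ pairs d, ∀ q ∈ pairs d,
    bmap d p.1 p.2 = bmap d q.1 q.2 → p = q := by
  intro p hp q hq h
  rw [mem_pairs] at hp hq
  obtain ⟨hp1, hp2, hp3⟩ := hp
  obtain ⟨hq1, hq2, hq3⟩ := hq
  rcases lt_trichotomy p.1 q.1 with h1 | h1 | h1
  · exact absurd h (Nat.ne_of_lt (bmap_lt d hp1 hp2 hp3 hq1 hq2 hq3 (Or.inl h1)))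
  · rcases lt_trichotomy p.2 q.2 with h2 | h2 | h2
    · exact absurd h (Nat.ne_of_lt (bmap_lt d hp1 hp2 hp3 hq1 hq2 hq3 (Or.inr ⟨h1, h2⟩)))
    · exact Prod.ext h1 h2
    · exact absurd h.symm (Nat.ne_of_lt (bmap_lt d hq1 hq2 hq3 hp1 hp2 hp3 (Or.inr ⟨h1.symm, h2⟩)))
  · exact absurd h.symm (Nat.ne_of_lt (bmap_lt d hq1 hq2 hq3 hp1 hp2 hp3 (Or.inl h1)))

lemma card_pairs (d : ℕ) (hd : 2 ≤ d) : (pairs d).card = d' d := by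
  have h1 : (pairs d).card = ∑ i ∈ Finset.Icc 1 d, (d - i) := by
    rw [pairs, Finset.card_filter, Finset.sum_product]
    apply Finset.sum_congr rfl
    intro i _
    rw [← Finset.card_filter]
    have hf : (Finset.Icc 1 d).filter (fun j => i < j) = Finset.Icc (i + 1) d := by
      ext j; simp only [Finset.mem_filter, Finset.mem_Icc]; omega
    rw [hf, Nat.card_Icc]
    omega
  have h2 : Finset.Icc 1 d = Finset.image (fun x => d - x) (Finset.range d) := by
    ext i
    simp only [Finset.mem_Icc, Finset.mem_image, Finset.mem_range]
    constructor
    · intro hi; exact ⟨d - i, by omega, by omega⟩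
    · rintro ⟨x, hx, rfl⟩; omega
  have h3 : ∑ i ∈ Finset.Icc 1 d, (d - i) = ∑ x ∈ Finset.range d, x := by
    rw [h2, Finset.sum_image (by intro x hx y hy h; simp only [Finset.mem_coe, Finset.mem_range] at hx hy h; omega)]
    apply Finset.sum_congr rfl
    intro x hx
    simp only [Finset.mem_range] at hx
    omega
  have h4 := Finset.sum_range_id_mul_two d
  have h5 := two_mul_d' d (by omega)
  set B := d * (d - 1)
  omega

lemma sum_sub_telescope (f : ℕ → ℕ) (hanti : ∀ i j, 1 ≤ i → i ≤ j → f j ≤ f i)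
    (a N : ℕ) (ha : 1 ≤ a) (haN : a ≤ N) (h0 : f (N + 1) = 0) :
    ∑ j ∈ Finset.Icc a N, (f j - f (j + 1)) = f a := by
  have key : ∀ M, a ≤ M → ∑ j ∈ Finset.Icc a M, (f j - f (j + 1)) = f a - f (M + 1) := by
    intro M hM
    induction M, hM using Nat.le_induction with
    | base => simp
    | succ M hM ih =>
      rw [Finset.sum_Icc_succ_top (by omega), ih]
      have h1 : f (M + 1) ≤ f a := hanti a (M + 1) ha (by omega)
      have h2 : f (M + 1 + 1) ≤ f (M + 1) := hanti (M + 1) (M + 1 + 1) (by omega) (by omega)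
      omega
  rw [key N haN, h0]
  omega

lemma antitone_map_eq (N : ℕ) (f g : ℕ → ℕ)
    (hf : ∀ i j, 1 ≤ i → i ≤ j → j ≤ N → f j ≤ f i)
    (hg : ∀ i j, 1 ≤ i → i ≤ j → j ≤ N → g j ≤ g i)
    (h : (Finset.Icc 1 N).val.map f = (Finset.Icc 1 N).val.map g)
    (i : ℕ) (h1 : 1 ≤ i) (h2 : i ≤ N) : f i = g i := by
  have hval : (Finset.Icc 1 N).val = (↑(List.range' 1 N) : Multiset ℕ) := by
    have e : N + 1 - 1 = N := by omega
    rw [Nat.Icc_eq_range', e]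
  rw [hval] at h
  have hperm : ((List.range' 1 N).map f).Perm ((List.range' 1 N).map g) := by
    rw [← Multiset.coe_eq_coe]
    simpa using h
  have hsorted : ∀ h : ℕ → ℕ, (∀ i j, 1 ≤ i → i ≤ j → j ≤ N → h j ≤ h i) →
      List.Pairwise (· ≥ ·) ((List.range' 1 N).map h) := by
    intro h hh
    rw [List.pairwise_map]
    apply List.Pairwise.imp_of_mem ?_ (List.pairwise_lt_range' (s := 1) (n := N))
    intro a b hma hmb hab
    rw [List.mem_range'_1] at hma hmb
    exact hh a b hma.1 (le_of_lt hab) (by omega)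
  have heq : (List.range' 1 N).map f = (List.range' 1 N).map g :=
    List.Perm.eq_of_pairwise' (hsorted f hf) (hsorted g hg) hperm
  have hlen : ∀ h : ℕ → ℕ, i - 1 < ((List.range' 1 N).map h).length := by
    intro h; rw [List.length_map, List.length_range']; omega
  have key : ∀ h : ℕ → ℕ, ((List.range' 1 N).map h)[i-1]'(hlen h) = h i := by
    intro h
    rw [List.getElem_map, List.getElem_range']
    congr 1
    omega
  rw [← key f, ← key g]
  exact List.getElem_of_eq heq _

lemma bmap_image (d : ℕ) (hd : 2 ≤ d) :
    Finset.image (fun p : ℕ × ℕ => bmap d p.1 p.2) (pairs d)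
      = Finset.Icc (d' d + 1) (2 * d' d) := by
  apply Finset.eq_of_subset_of_card_le
  · intro a ha
    obtain ⟨p, hp, rfl⟩ := Finset.mem_image.mp ha
    rw [mem_pairs] at hp
    exact bmap_mem d hd hp.1 hp.2.1 hp.2.2
  · rw [Finset.card_image_of_injOn (fun p hp q hq h => bmap_injOn d p hp q hq h),
      card_pairs d hd, Nat.card_Icc]
    omega

lemma bmap_map_val (d : ℕ) (hd : 2 ≤ d) :
    (pairs d).val.map (fun p : ℕ × ℕ => bmap d p.1 p.2)
      = (Finset.Icc (d' d + 1) (2 * d' d)).val := by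
  rw [← bmap_image d hd, Finset.image_val,
    Multiset.dedup_eq_self.mpr
      (Multiset.Nodup.map_on (fun p hp q hq h => bmap_injOn d p hp q hq h) (pairs d).nodup)]

lemma filter_bmap_singleton (d : ℕ) (hd : 2 ≤ d) {a : ℕ} (h1 : d' d < a) (h2 : a ≤ 2 * d' d) :
    ∃ p : ℕ × ℕ, 1 ≤ p.1 ∧ p.1 < p.2 ∧ p.2 ≤ d ∧ bmap d p.1 p.2 = a ∧
      (pairs d).filter (fun q => bmap d q.1 q.2 = a) = {p} := by
  have ha : a ∈ Finset.image (fun p : ℕ × ℕ => bmap d p.1 p.2) (pairs d) := by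
    rw [bmap_image d hd, Finset.mem_Icc]; omega
  obtain ⟨p, hp, hpa⟩ := Finset.mem_image.mp ha
  have hp' := (mem_pairs d).mp hp
  refine ⟨p, hp'.1, hp'.2.1, hp'.2.2, hpa, ?_⟩
  ext q
  simp only [Finset.mem_filter, Finset.mem_singleton]
  constructor
  · rintro ⟨hq, hqa⟩
    exact bmap_injOn d q hq p hp (by rw [hqa, hpa])
  · rintro rfl
    exact ⟨hp, hpa⟩

lemma Tval_multiset (d : ℕ) (hd : 2 ≤ d) (lam nu : ℕ → ℕ) :
    (Finset.Icc 1 (2 * d' d)).val.map (Tval d lam nu)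
      = Mpair d lam + (Finset.Icc 1 (d' d)).val.map nu := by
  have hdisj : Disjoint (Finset.Icc 1 (d' d)) (Finset.Icc (d' d + 1) (2 * d' d)) := by
    rw [Finset.disjoint_left]
    intro a ha hb
    rw [Finset.mem_Icc] at ha hb
    omega
  have hun : (Finset.Icc 1 (d' d)).disjUnion (Finset.Icc (d' d + 1) (2 * d' d)) hdisj
      = Finset.Icc 1 (2 * d' d) := by
    rw [Finset.disjUnion_eq_union]
    ext x
    simp only [Finset.mem_union, Finset.mem_Icc]
    omega
  have hsplit : (Finset.Icc 1 (2 * d' d)).val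
      = (Finset.Icc 1 (d' d)).val + (Finset.Icc (d' d + 1) (2 * d' d)).val := by
    rw [← hun]; rfl
  rw [hsplit, Multiset.map_add]
  have hA : (Finset.Icc 1 (d' d)).val.map (Tval d lam nu)
      = (Finset.Icc 1 (d' d)).val.map nu := by
    apply Multiset.map_congr rfl
    intro x hx
    rw [← Finset.mem_def, Finset.mem_Icc] at hx
    rw [Tval, if_pos hx.2]
  have hB : (Finset.Icc (d' d + 1) (2 * d' d)).val.map (Tval d lam nu) = Mpair d lam := by
    rw [← bmap_map_val d hd, Multiset.map_map]
    apply Multiset.map_congr rfl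
    intro p hp
    rw [← Finset.mem_def, mem_pairs] at hp
    obtain ⟨h1, h2, h3⟩ := hp
    have hm := bmap_mem d hd h1 h2 h3
    rw [Finset.mem_Icc] at hm
    obtain ⟨q, hq1, hq2, hq3, hqa, hfil⟩ := filter_bmap_singleton d hd (by omega) hm.2
    have hpq : p = q := by
      have hqmem : q ∈ pairs d := (mem_pairs d).mpr ⟨hq1, hq2, hq3⟩
      exact bmap_injOn d p ((mem_pairs d).mpr ⟨h1, h2, h3⟩) q hqmem (by rw [hqa])
    show Tval d lam nu (bmap d p.1 p.2) = lam p.1 + lam p.2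
    rw [Tval, if_neg (by omega), hpq, hqa, hfil, Finset.sum_singleton, ← hpq]
  rw [hA, hB, add_comm]

lemma perm_map_val (d : ℕ) (σ : ℕ → ℕ) (hσ : IsPermOn d σ) :
    (Finset.Icc 1 (2 * d' d)).val.map σ = (Finset.Icc 1 (2 * d' d)).val := by
  have hco : (↑(Finset.Icc 1 (2 * d' d)) : Set ℕ) = Set.Icc 1 (2 * d' d) := Finset.coe_Icc 1 _
  have hinj : Set.InjOn σ ↑(Finset.Icc 1 (2 * d' d)) := by rw [hco]; exact hσ.injOn
  have himg : Finset.image σ (Finset.Icc 1 (2 * d' d)) = Finset.Icc 1 (2 * d' d) := by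
    apply Finset.eq_of_subset_of_card_le
    · intro a ha
      obtain ⟨x, hx, rfl⟩ := Finset.mem_image.mp ha
      rw [Finset.mem_Icc] at hx
      have := hσ.mapsTo (show x ∈ Set.Icc 1 (2 * d' d) from by rw [Set.mem_Icc]; omega)
      rw [Set.mem_Icc] at this
      rw [Finset.mem_Icc]; omega
    · rw [Finset.card_image_of_injOn hinj]
  have hnd : ((Finset.Icc 1 (2 * d' d)).val.map σ).Nodup :=
    Multiset.Nodup.map_on (fun x hx y hy h => hinj (Finset.mem_coe.mpr hx) (Finset.mem_coe.mpr hy) h)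
      (Finset.Icc 1 (2 * d' d)).nodup
  calc (Finset.Icc 1 (2 * d' d)).val.map σ
      = (Finset.image σ (Finset.Icc 1 (2 * d' d))).val := by
        rw [Finset.image_val, Multiset.dedup_eq_self.mpr hnd]
    _ = (Finset.Icc 1 (2 * d' d)).val := by rw [himg]


/-- with `σ = σ_{λ,ν}` and `m_1 ≥ … ≥ m_{2d'}` the weakly decreasing
rearrangement of the multiset `μ_λ ∪ ν`, one has
`m_i = ∑_{j=1}^d v_{σ(i),j} r_j + ∑_{j=1}^{d'} v_{σ(i),d+j} s_j` where
`r_j = λ_j − λ_{j+1}` and `s_j = ν_j − ν_{j+1}`. -/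
theorem m_eq_v_sum (d : ℕ) (hd : 2 ≤ d) (lam nu : ℕ → ℕ)
    (hlam : IsPart d lam) (hnu : IsPart (d' d) nu)
    (mu : ℕ → ℕ) (hmu : IsPart (d' d) mu)
    (hmuval : (Finset.Icc 1 (d' d)).val.map mu = Mpair d lam)
    (hdom : ∀ k, 1 ≤ k → k ≤ d' d → nu k ≤ mu k)
    (σ : ℕ → ℕ) (hσ : IsSorting d lam nu σ)
    (m : ℕ → ℕ)
    (hm_anti : ∀ i j, 1 ≤ i → i ≤ j → j ≤ 2 * d' d → m j ≤ m i)
    (hm_val : (Finset.Icc 1 (2 * d' d)).val.map m =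
      Mpair d lam + (Finset.Icc 1 (d' d)).val.map nu)
    (i : ℕ) (hi1 : 1 ≤ i) (hi2 : i ≤ 2 * d' d) :
    m i = (∑ j ∈ Finset.Icc 1 d, v d (σ i) j * (lam j - lam (j + 1))) +
        ∑ j ∈ Finset.Icc 1 (d' d), v d (σ i) (d + j) * (nu j - nu (j + 1)) := by

  obtain ⟨hperm, hsort⟩ := hσ
  have hd'1 : 1 ≤ d' d := by
    have h5 := two_mul_d' d (by omega)
    have h6 : 2 ≤ d * (d - 1) := le_trans hd (Nat.le_mul_of_pos_right d (by omega))
    set B := d * (d - 1)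
    omega
  have hσi : 1 ≤ σ i ∧ σ i ≤ 2 * d' d := by
    have hmem := hperm.mapsTo (show i ∈ Set.Icc 1 (2 * d' d) from Set.mem_Icc.mpr ⟨hi1, hi2⟩)
    exact Set.mem_Icc.mp hmem
  have hTanti : ∀ a b, 1 ≤ a → a ≤ b → b ≤ 2 * d' d →
      Tval d lam nu (σ b) ≤ Tval d lam nu (σ a) := by
    intro a b ha hab hb
    rcases Nat.eq_or_lt_of_le hab with rfl | h
    · exact le_rfl
    · rcases hsort a b ha h hb with h' | ⟨h', _⟩
      · exact le_of_lt h'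
      · exact le_of_eq h'.symm
  have hmval : (Finset.Icc 1 (2 * d' d)).val.map m
      = (Finset.Icc 1 (2 * d' d)).val.map (fun x => Tval d lam nu (σ x)) := by
    calc (Finset.Icc 1 (2 * d' d)).val.map m
        = Mpair d lam + (Finset.Icc 1 (d' d)).val.map nu := hm_val
      _ = (Finset.Icc 1 (2 * d' d)).val.map (Tval d lam nu) :=
          (Tval_multiset d hd lam nu).symm
      _ = ((Finset.Icc 1 (2 * d' d)).val.map σ).map (Tval d lam nu) := by
          rw [perm_map_val d σ hperm]
      _ = (Finset.Icc 1 (2 * d' d)).val.map (fun x => Tval d lam nu (σ x)) := by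
          rw [Multiset.map_map]; rfl
  have hmi : m i = Tval d lam nu (σ i) :=
    antitone_map_eq (2 * d' d) m (fun x => Tval d lam nu (σ x)) hm_anti hTanti hmval i hi1 hi2
  rw [hmi]
  by_cases hc : σ i ≤ d' d
  · have h1 : ∑ j ∈ Finset.Icc 1 d, v d (σ i) j * (lam j - lam (j + 1)) = 0 := by
      apply Finset.sum_eq_zero
      intro j hj
      rw [Finset.mem_Icc] at hj
      rw [v, if_pos hc, if_neg (by omega), Nat.zero_mul]
    have h2 : ∀ j ∈ Finset.Icc 1 (d' d), v d (σ i) (d + j) * (nu j - nu (j + 1))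
        = if σ i ≤ j then nu j - nu (j + 1) else 0 := by
      intro j hj
      rw [Finset.mem_Icc] at hj
      rw [v, if_pos hc]
      by_cases hcc : σ i ≤ j
      · rw [if_pos ⟨by omega, by omega⟩, if_pos hcc, Nat.one_mul]
      · rw [if_neg (by omega), if_neg hcc, Nat.zero_mul]
    have hfil : (Finset.Icc 1 (d' d)).filter (fun j => σ i ≤ j) = Finset.Icc (σ i) (d' d) := by
      ext j; simp only [Finset.mem_filter, Finset.mem_Icc]; omega
    rw [Tval, if_pos hc, h1, Finset.sum_congr rfl h2, ← Finset.sum_filter, hfil,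
      sum_sub_telescope nu hnu.1 (σ i) (d' d) hσi.1 hc (hnu.2 _ (by omega))]
    omega
  · push_neg at hc
    obtain ⟨p, hp1, hp2, hp3, hpa, hfil⟩ := filter_bmap_singleton d hd hc hσi.2
    have hcn : ¬ σ i ≤ d' d := by omega
    have hv : ∀ l, v d (σ i) l
        = (if p.1 ≤ l ∧ l ≤ d then 1 else 0) + (if p.2 ≤ l ∧ l ≤ d then 1 else 0) := by
      intro l
      rw [v, if_neg hcn, hfil, Finset.sum_singleton]
    have hT : Tval d lam nu (σ i) = lam p.1 + lam p.2 := by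
      rw [Tval, if_neg hcn, hfil, Finset.sum_singleton]
    have h2 : ∑ j ∈ Finset.Icc 1 (d' d), v d (σ i) (d + j) * (nu j - nu (j + 1)) = 0 := by
      apply Finset.sum_eq_zero
      intro j hj
      rw [Finset.mem_Icc] at hj
      rw [hv (d + j), if_neg (by omega), if_neg (by omega)]
      simp
    have h1 : ∀ j ∈ Finset.Icc 1 d, v d (σ i) j * (lam j - lam (j + 1))
        = (if p.1 ≤ j then lam j - lam (j + 1) else 0)
          + (if p.2 ≤ j then lam j - lam (j + 1) else 0) := by
      intro j hj
      rw [Finset.mem_Icc] at hj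
      rw [hv j]
      by_cases c1 : p.1 ≤ j <;> by_cases c2 : p.2 ≤ j <;>
        simp [c1, c2, hj.2] <;> omega
    have hfa : (Finset.Icc 1 d).filter (fun j => p.1 ≤ j) = Finset.Icc p.1 d := by
      ext j; simp only [Finset.mem_filter, Finset.mem_Icc]; omega
    have hfb : (Finset.Icc 1 d).filter (fun j => p.2 ≤ j) = Finset.Icc p.2 d := by
      ext j; simp only [Finset.mem_filter, Finset.mem_Icc]; omega
    rw [Finset.sum_congr rfl h1, Finset.sum_add_distrib, ← Finset.sum_filter,
      ← Finset.sum_filter, hfa, hfb,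
      sum_sub_telescope lam hlam.1 p.1 d hp1 (by omega) (hlam.2 _ (by omega)),
      sum_sub_telescope lam hlam.1 p.2 d (by omega) hp3 (hlam.2 _ (by omega)), hT, h2]
    omega

end FreeNilpotent
end

section
/- If σ ∈ 𝒮_{2d'} and the Dyck word w_σ associated to σ is the trivial Dyck word 0^{d'}1^{d'}, then the product of Gaussian multinomial coefficients GMC_{I,σ} equals (d choose I)_{q^{-1}} · (d' choose J_σ)_{q^{-1}}, where J_σ = {j ∈ [d'−1] : σ^{-1}(j) < σ^{-1}(j+1)}. -/
open scoped Classical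

namespace FreeNilpotent

/-- The Gaussian binomial coefficient `(n choose k)_q`. -/
noncomputable def qbinom (q : ℚ) (n k : ℕ) : ℚ :=
  ∏ i ∈ Finset.range k, (1 - q ^ (n - i)) / (1 - q ^ (k - i))

/-- Auxiliary recursion for the Gaussian multinomial coefficient. -/
noncomputable def qmultinomAux (q : ℚ) : ℕ → List ℕ → ℚ
  | _, [] => 1
  | n, j :: rest => qbinom q n j * qmultinomAux q (n - j) (rest.map fun x => x - j)
  termination_by n l => l.length
  decreasing_by simpa using Nat.lt_succ_self rest.length

/-- The Gaussian multinomial coefficient `(n choose J)_q` for `J ⊆ [n−1]`. -/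
noncomputable def qmultinom (q : ℚ) (n : ℕ) (J : Finset ℕ) : ℚ :=
  qmultinomAux q n (J.sort (· ≤ ·))

/-- `L_j(σ) = #({σ(1),…,σ(j)} ∩ (d'+[d']))`. -/
noncomputable def Lf (d : ℕ) (σ : ℕ → ℕ) (j : ℕ) : ℕ :=
  ((Finset.Icc 1 j).filter fun l => d' d < σ l).card

/-- `M_j(σ) = #({σ(1),…,σ(j)} ∩ [d'])`. -/
noncomputable def Mf (d : ℕ) (σ : ℕ → ℕ) (j : ℕ) : ℕ :=
  ((Finset.Icc 1 j).filter fun l => σ l ≤ d' d).card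

/-- The set `Asc(σ) ∪ {0, 2d'}` of break points. -/
noncomputable def ascSet (d : ℕ) (σ : ℕ → ℕ) : Finset ℕ :=
  insert 0 (insert (2 * d' d)
    ((Finset.Icc 1 (2 * d' d - 1)).filter fun i => σ i < σ (i + 1)))

/-- Product of `f a b` over consecutive entries `a, b` of a list. -/
noncomputable def consProd (f : ℕ → ℕ → ℚ) : List ℕ → ℚ
  | a :: b :: rest => f a b * consProd f (b :: rest)
  | _ => 1

/-- The product of Gaussian multinomial coefficients `GMC_{I,σ}` associated with
`(I,σ)`:
`(d choose I)_{q^{-1}} ∏_{i∈[r]} (L_{j_i}(σ) − M_{j_{i−1}}(σ) choose M_{j_i}(σ) − M_{j_{i−1}}(σ))_{q^{-1}}`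
where `{j_0 < j_1 < … < j_r} = Asc(σ) ∪ {0, 2d'}`. -/
noncomputable def GMC (d : ℕ) (I : Finset ℕ) (σ : ℕ → ℕ) (q : ℚ) : ℚ :=
  qmultinom q⁻¹ d I *
    consProd (fun a b => qbinom q⁻¹ (Lf d σ b - Mf d σ a) (Mf d σ b - Mf d σ a))
      ((ascSet d σ).sort (· ≤ ·))


/-! ### Auxiliary lemmas for GMC_no_overlap -/

private lemma qbinom_zero' (q : ℚ) (n : ℕ) : qbinom q n 0 = 1 := by
  simp [qbinom]

private lemma qbinom_self' (q : ℚ) (hq : ∀ n : ℕ, 1 ≤ n → (1 : ℚ) - q ^ n ≠ 0) (n : ℕ) :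
    qbinom q n n = 1 := by
  unfold qbinom
  apply Finset.prod_eq_one
  intro i hi
  rw [Finset.mem_range] at hi
  exact div_self (hq (n - i) (by omega))

private lemma qmultinomAux_append_self (q : ℚ) (hq : ∀ n : ℕ, 1 ≤ n → (1 : ℚ) - q ^ n ≠ 0) :
    ∀ (l : List ℕ) (n : ℕ), qmultinomAux q n (l ++ [n]) = qmultinomAux q n l
  | [], n => by
      have hnil : ∀ m, qmultinomAux q m [] = 1 := fun m => by rw [qmultinomAux]
      have hcons : ∀ (m j : ℕ) (rest : List ℕ), qmultinomAux q m (j :: rest)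
          = qbinom q m j * qmultinomAux q (m - j) (rest.map fun x => x - j) :=
        fun m j rest => by rw [qmultinomAux]
      rw [List.nil_append, hcons, qbinom_self' q hq, List.map_nil, hnil, hnil, one_mul]
  | j :: rest, n => by
      have hcons : ∀ (m j : ℕ) (rest : List ℕ), qmultinomAux q m (j :: rest)
          = qbinom q m j * qmultinomAux q (m - j) (rest.map fun x => x - j) :=
        fun m j rest => by rw [qmultinomAux]
      rw [List.cons_append, hcons, hcons, List.map_append]
      rw [show (List.map (fun x => x - j) [n]) = [n - j] from rfl]
      rw [qmultinomAux_append_self q hq (rest.map fun x => x - j) (n - j)]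
  termination_by l _ => l.length
  decreasing_by simp

private lemma consProd_congr' (f g : ℕ → ℕ → ℚ) :
    ∀ l : List ℕ, l.Pairwise (· ≤ ·) →
      (∀ a b, a ∈ l → b ∈ l → a ≤ b → f a b = g a b) →
      consProd f l = consProd g l
  | [], _, _ => rfl
  | [_], _, _ => rfl
  | a :: b :: rest, hs, h => by
      have h1 : f a b = g a b :=
        h a b (by simp) (by simp) (List.rel_of_pairwise_cons hs (a' := b) (by simp))
      have h2 := consProd_congr' f g (b :: rest) hs.of_cons
        (fun x y hx hy hxy => h x y (by simp [hx]) (by simp [hy]) hxy)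
      show f a b * consProd f (b :: rest) = g a b * consProd g (b :: rest)
      rw [h1, h2]

private lemma consProd_qaux (q : ℚ) (N : ℕ) (l : List ℕ) :
    ∀ c : ℕ, c ≤ N → (∀ x ∈ l, x ≤ N) → List.Chain (· ≤ ·) c l →
      consProd (fun a b => qbinom q (N - a) (b - a)) (c :: l)
        = qmultinomAux q (N - c) (l.map fun x => x - c) := by
  induction l with
  | nil =>
    intro c _ _ _
    show (1 : ℚ) = qmultinomAux q (N - c) []
    rw [qmultinomAux]
  | cons x rest ih =>
    intro c hc hmem hch
    rw [List.Chain, List.chain_cons] at hch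
    have hcx : c ≤ x := hch.1
    have hx : x ≤ N := hmem x (by simp)
    show qbinom q (N - c) (x - c) *
        consProd (fun a b => qbinom q (N - a) (b - a)) (x :: rest)
      = qmultinomAux q (N - c) ((x - c) :: rest.map fun y => y - c)
    have hcons : ∀ (m j : ℕ) (rest : List ℕ), qmultinomAux q m (j :: rest)
        = qbinom q m j * qmultinomAux q (m - j) (rest.map fun y => y - j) :=
      fun m j rest => by rw [qmultinomAux]
    rw [ih x hx (fun y hy => hmem y (by simp [hy])) hch.2, hcons]
    congr 1
    rw [show N - c - (x - c) = N - x by omega]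
    congr 1
    rw [List.map_map]
    apply List.map_congr_left
    intro a _
    simp only [Function.comp_apply]
    omega

private lemma consProd_skip (q : ℚ) (N D : ℕ) (l : List ℕ) :
    l.Pairwise (· ≤ ·) → ∀ c, c ≤ D →
      consProd (fun a b => qbinom q (N - max a D) (b - max a D)) (c :: l)
        = consProd (fun a b => qbinom q (N - max a D) (b - max a D))
            (D :: l.filter (fun x => D < x)) := by
  induction l with
  | nil => intro _ c _; rfl
  | cons x rest ih =>
    intro hs c hc
    by_cases hx : D < x
    · have hrest : rest.filter (fun y => D < y) = rest :=
        List.filter_eq_self.mpr fun y hy => by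
          simpa using lt_of_lt_of_le hx (List.rel_of_pairwise_cons hs hy)
      rw [List.filter_cons_of_pos (by simpa using hx), hrest]
      show qbinom q (N - max c D) (x - max c D) * _
          = qbinom q (N - max D D) (x - max D D) * _
      rw [show max c D = D by omega, show max D D = D by omega]
    · push_neg at hx
      rw [List.filter_cons_of_neg (by simpa using hx)]
      rw [← ih hs.of_cons x hx]
      show qbinom q (N - max c D) (x - max c D) * _ = _
      rw [show x - max c D = 0 by omega, qbinom_zero', one_mul]

private lemma chain_of_sorted_of_le :
    ∀ (l : List ℕ) (c : ℕ), l.Pairwise (· ≤ ·) → (∀ x ∈ l, c ≤ x) →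
      List.Chain (· ≤ ·) c l
  | [], _, _, _ => List.Chain.nil
  | x :: t, c, hs, hle =>
      List.Chain.cons (hle x (by simp))
        (chain_of_sorted_of_le t x hs.of_cons (fun y hy => List.rel_of_pairwise_cons hs hy))

private lemma decr_trans (σ : ℕ → ℕ) (s t : ℕ)
    (h : ∀ m, s ≤ m → m < t → σ (m + 1) < σ m) :
    ∀ b a, s ≤ a → a < b → b ≤ t → σ b < σ a := by
  intro b
  induction b with
  | zero => omega
  | succ b ih =>
    intro a ha hab hbt
    rcases Nat.lt_or_ge a b with h' | h'
    · exact lt_trans (h b (by omega) (by omega)) (ih a ha h' (by omega))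
    · have hab' : a = b := by omega
      subst hab'
      exact h a (by omega) (by omega)

/-- if `σ ∈ 𝒮_{2d'}` has trivial associated Dyck word
`w_σ = 0^{d'}1^{d'}` (i.e. `σ(i) > d'` for all `i ∈ [d']`), then
`GMC_{I,σ} = (d choose I)_{q^{-1}} (d' choose J_σ)_{q^{-1}}`. -/
theorem GMC_no_overlap (d : ℕ) (hd : 2 ≤ d) (I : Finset ℕ) (σ : ℕ → ℕ)
    (hW : memW d I σ)
    (htriv : ∀ i, 1 ≤ i → i ≤ d' d → d' d < σ i)
    (q : ℚ) (hq : ∀ n : ℕ, 1 ≤ n → (1 : ℚ) - q⁻¹ ^ n ≠ 0) :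
    GMC d I σ q =
      qmultinom q⁻¹ d I *
        qmultinom q⁻¹ (d' d) ((Finset.Icc 1 (d' d - 1)).filter fun j => Jmem d σ j) := by
  classical
  -- Notation
  set D := d' d with hDdef
  set N := 2 * D with hNdef
  have hD1 : 1 ≤ D := by
    have h2 : 2 ≤ d * (d - 1) := le_trans (by omega) (Nat.mul_le_mul_right (d - 1) hd)
    have := Nat.div_le_div_right (c := 2) h2
    simpa [d', hDdef] using this
  obtain ⟨hI, hS, -⟩ := hW
  obtain ⟨hbij, -, hdes⟩ := hS
  simp only [← hDdef, ← hNdef] at hdes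
  have hmap : ∀ l, 1 ≤ l → l ≤ N → 1 ≤ σ l ∧ σ l ≤ N := by
    intro l h1 h2
    have := hbij.mapsTo (show l ∈ Set.Icc 1 N from ⟨h1, h2⟩)
    exact this
  have hinj : ∀ l m, 1 ≤ l → l ≤ N → 1 ≤ m → m ≤ N → σ l = σ m → l = m := by
    intro l m h1 h2 h3 h4 h
    exact hbij.injOn ⟨h1, h2⟩ ⟨h3, h4⟩ h
  -- The image of the first half is the upper interval
  have hA1 : (Finset.Icc 1 D).image σ = Finset.Icc (D + 1) N := by
    apply Finset.eq_of_subset_of_card_le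
    · intro x hx
      rw [Finset.mem_image] at hx
      obtain ⟨m, hm, rfl⟩ := hx
      rw [Finset.mem_Icc] at hm
      rw [Finset.mem_Icc]
      refine ⟨htriv m hm.1 hm.2, (hmap m hm.1 (by omega)).2⟩
    · have hinj' : Set.InjOn σ ↑(Finset.Icc 1 D) := by
        intro a ha b hb hab
        simp only [Finset.coe_Icc, Set.mem_Icc] at ha hb
        exact hinj a b ha.1 (by omega) hb.1 (by omega) hab
      rw [Finset.card_image_of_injOn hinj', Nat.card_Icc, Nat.card_Icc]
      omega
  -- Values on the second half are small
  have hF1 : ∀ l, D < l → l ≤ N → 1 ≤ σ l ∧ σ l ≤ D := by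
    intro l hl1 hl2
    refine ⟨(hmap l (by omega) hl2).1, ?_⟩
    by_contra hgt
    push_neg at hgt
    have hmem : σ l ∈ Finset.Icc (D + 1) N := by
      rw [Finset.mem_Icc]
      exact ⟨hgt, (hmap l (by omega) hl2).2⟩
    rw [← hA1, Finset.mem_image] at hmem
    obtain ⟨m, hm, hms⟩ := hmem
    rw [Finset.mem_Icc] at hm
    have := hinj m l hm.1 (by omega) (by omega) hl2 hms
    omega
  -- The inverse function (position of each value)
  set pos : ℕ → ℕ := fun v => Function.invFunOn σ (Set.Icc 1 N) v with hposdef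
  have hpos : ∀ v, 1 ≤ v → v ≤ N → (1 ≤ pos v ∧ pos v ≤ N) ∧ σ (pos v) = v := by
    intro v h1 h2
    have hex : ∃ a ∈ Set.Icc (1:ℕ) N, σ a = v := by
      have := hbij.surjOn (show v ∈ Set.Icc 1 N from ⟨h1, h2⟩)
      obtain ⟨a, ha, hav⟩ := this
      exact ⟨a, ha, hav⟩
    exact ⟨Function.invFunOn_mem hex, Function.invFunOn_eq hex⟩
  have hpos_unique : ∀ v m, 1 ≤ m → m ≤ N → σ m = v → pos v = m := by
    intro v m h1 h2 h3
    have hv1 : 1 ≤ v := by have := hmap m h1 h2; omega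
    have hv2 : v ≤ N := by have := hmap m h1 h2; omega
    obtain ⟨⟨hp1, hp2⟩, hpe⟩ := hpos v hv1 hv2
    exact hinj (pos v) m hp1 hp2 h1 h2 (by rw [hpe, h3])
  have hpos2 : ∀ v, 1 ≤ v → v ≤ D → (D + 1 ≤ pos v ∧ pos v ≤ N) ∧ σ (pos v) = v := by
    intro v h1 h2
    obtain ⟨⟨hp1, hp2⟩, hpe⟩ := hpos v h1 (by omega)
    refine ⟨⟨?_, hp2⟩, hpe⟩
    by_contra hlt
    push_neg at hlt
    have := htriv (pos v) hp1 (by omega)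
    omega
  -- Decreasing run condition, transitively closed
  have cond3 : ∀ i j, D < i → i < j → j ≤ N → σ j < σ i →
      ∀ a b, i ≤ a → a < b → b ≤ j → σ b < σ a := by
    intro i j hi hij hj hlt a b
    have hstep := hdes i j (by omega) hij hj
      (hF1 i hi (by omega)).2 (hF1 j (by omega) hj).2 hlt
    intro ha hab hb
    exact decr_trans σ i j (fun m hm1 hm2 => hstep m hm1 hm2) b a ha hab hb
  -- From a single ascent pair, a full split
  have L3 : ∀ i j, D < i → i < j → j ≤ N → σ i < σ j →
      ∀ s t, D < s → s ≤ i → j ≤ t → t ≤ N → σ s < σ t := by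
    intro i j hi hij hj hasc s t hs1 hs2 ht1 ht2
    have hst : s < t := by omega
    have hne : σ s ≠ σ t := fun h => by
      have := hinj s t (by omega) (by omega) (by omega) ht2 h; omega
    rcases lt_or_gt_of_ne hne with h | h
    · exact h
    · exfalso
      have := cond3 s t hs1 hst ht2 h i j hs2 hij ht1
      omega
  -- THE HEART: ascents in the second half correspond to membership in J
  have heart : ∀ k, 1 ≤ k → k + 1 ≤ D →
      (σ (D + k) < σ (D + k + 1) ↔ pos k < pos (k + 1)) := by
    intro k hk1 hk2
    constructor
    · intro hasc
      have hsplit : ∀ s, D + 1 ≤ s → s ≤ D + k → ∀ t, D + k + 1 ≤ t → t ≤ N → σ s < σ t :=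
        fun s hs1 hs2 t ht1 ht2 =>
          L3 (D + k) (D + k + 1) (by omega) (by omega) (by omega) hasc s t
            (by omega) hs2 ht1 ht2
      have hcardA : ((Finset.Icc (D + 1) (D + k)).image σ).card = k := by
        have hinj' : Set.InjOn σ ↑(Finset.Icc (D + 1) (D + k)) := by
          intro a ha b hb hab
          simp only [Finset.coe_Icc, Set.mem_Icc] at ha hb
          exact hinj a b (by omega) (by omega) (by omega) (by omega) hab
        rw [Finset.card_image_of_injOn hinj', Nat.card_Icc]
        omega
      have claim1 : ∀ v, 1 ≤ v → v ≤ k → pos v ≤ D + k := by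
        intro v hv1 hv2
        by_contra hgt
        push_neg at hgt
        obtain ⟨⟨hp1, hp2⟩, hpe⟩ := hpos2 v hv1 (by omega)
        have hsub : (Finset.Icc (D + 1) (D + k)).image σ ⊆ Finset.Icc 1 (v - 1) := by
          intro x hx
          rw [Finset.mem_image] at hx
          obtain ⟨s, hs, rfl⟩ := hx
          rw [Finset.mem_Icc] at hs
          have h1 := hsplit s hs.1 hs.2 (pos v) (by omega) hp2
          rw [hpe] at h1
          rw [Finset.mem_Icc]
          have := hF1 s (by omega) (by omega)
          omega
        have := Finset.card_le_card hsub
        rw [hcardA, Nat.card_Icc] at this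
        omega
      have claim2 : D + k < pos (k + 1) := by
        by_contra hle
        push_neg at hle
        obtain ⟨⟨hr1, hr2⟩, hre⟩ := hpos2 (k + 1) (by omega) hk2
        have hsub : Finset.Icc 1 (k + 1) ⊆ (Finset.Icc (D + 1) (D + k)).image σ := by
          intro v hv
          rw [Finset.mem_Icc] at hv
          rw [Finset.mem_image]
          rcases Nat.lt_or_ge v (k + 1) with h | h
          · obtain ⟨⟨hp1, hp2⟩, hpe⟩ := hpos2 v hv.1 (by omega)
            exact ⟨pos v, by rw [Finset.mem_Icc]; exact ⟨hp1, claim1 v hv.1 (by omega)⟩, hpe⟩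
          · have hv' : v = k + 1 := by omega
            subst hv'
            exact ⟨pos (k + 1), by rw [Finset.mem_Icc]; exact ⟨hr1, hle⟩, hre⟩
        have := Finset.card_le_card hsub
        rw [hcardA, Nat.card_Icc] at this
        omega
      have := claim1 k hk1 (le_refl k)
      omega
    · intro hpr
      obtain ⟨⟨hp1, hp2⟩, hpe⟩ := hpos2 k hk1 (by omega)
      obtain ⟨⟨hr1, hr2⟩, hre⟩ := hpos2 (k + 1) (by omega) hk2
      -- value split
      have vsplit : ∀ v w, 1 ≤ v → v ≤ k → k < w → w ≤ D → pos v < pos w := by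
        intro v w hv1 hv2 hw1 hw2
        by_contra hle
        push_neg at hle
        obtain ⟨⟨ht1, ht2⟩, hte⟩ := hpos2 v hv1 (by omega)
        obtain ⟨⟨hs1, hs2⟩, hse⟩ := hpos2 w (by omega) hw2
        have hne : pos w ≠ pos v := fun h => by
          have : w = v := by rw [← hse, h, hte]
          omega
        have hst : pos w < pos v := by omega
        -- σ (pos w) = w > v = σ (pos v), so decreasing on [pos w, pos v]
        have hdec := cond3 (pos w) (pos v) (by omega) hst ht2
          (by rw [hte, hse]; omega)
        rcases Nat.lt_or_ge (pos k) (pos w) with hc1 | hc1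
        · -- case p < s
          rcases Nat.lt_or_ge v k with hvk | hvk
          · have hdec2 := cond3 (pos k) (pos v) (by omega)
              (by omega) ht2 (by rw [hte, hpe]; omega)
            have := hdec2 (pos k) (pos w) (le_refl _) hc1 (by omega)
            rw [hse, hpe] at this
            omega
          · have hvk' : v = k := by omega
            subst hvk'
            omega
        · rcases Nat.lt_or_ge (pos v) (pos (k + 1)) with hc2 | hc2
          · -- case t < r and s ≤ p
            rcases Nat.lt_or_ge (k + 1) w with hwk | hwk
            · have hdec2 := cond3 (pos w) (pos (k + 1)) (by omega)
                (by omega) hr2 (by rw [hre, hse]; omega)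
              have := hdec2 (pos k) (pos (k + 1)) hc1 hpr (le_refl _)
              rw [hre, hpe] at this
              omega
            · have hwk' : w = k + 1 := by omega
              subst hwk'
              omega
          · -- case s ≤ p and r ≤ t
            have := hdec (pos k) (pos (k + 1)) hc1 hpr hc2
            rw [hre, hpe] at this
            omega
      have claim1' : ∀ v, 1 ≤ v → v ≤ k → pos v ≤ D + k := by
        intro v hv1 hv2
        by_contra hgt
        push_neg at hgt
        have hsub : (Finset.Icc (k + 1) D).image pos ⊆ Finset.Icc (D + k + 2) N := by
          intro x hx
          rw [Finset.mem_image] at hx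
          obtain ⟨w, hw, rfl⟩ := hx
          rw [Finset.mem_Icc] at hw
          have h1 := vsplit v w hv1 hv2 (by omega) hw.2
          obtain ⟨⟨hq1, hq2⟩, _⟩ := hpos2 w (by omega) hw.2
          rw [Finset.mem_Icc]
          omega
        have hcard : ((Finset.Icc (k + 1) D).image pos).card = D - k := by
          have hinj' : Set.InjOn pos ↑(Finset.Icc (k + 1) D) := by
            intro a ha b hb hab
            simp only [Finset.coe_Icc, Set.mem_Icc] at ha hb
            have h1 := (hpos2 a (by omega) ha.2).2
            have h2 := (hpos2 b (by omega) hb.2).2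
            rw [← h1, ← h2, hab]
          rw [Finset.card_image_of_injOn hinj', Nat.card_Icc]
          omega
        have := Finset.card_le_card hsub
        rw [hcard, Nat.card_Icc] at this
        omega
      have hQ : (Finset.Icc 1 k).image pos = Finset.Icc (D + 1) (D + k) := by
        apply Finset.eq_of_subset_of_card_le
        · intro x hx
          rw [Finset.mem_image] at hx
          obtain ⟨v, hv, rfl⟩ := hx
          rw [Finset.mem_Icc] at hv
          obtain ⟨⟨hq1, _⟩, _⟩ := hpos2 v hv.1 (by omega)
          rw [Finset.mem_Icc]
          exact ⟨hq1, claim1' v hv.1 hv.2⟩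
        · have hinj' : Set.InjOn pos ↑(Finset.Icc 1 k) := by
            intro a ha b hb hab
            simp only [Finset.coe_Icc, Set.mem_Icc] at ha hb
            have h1 := (hpos2 a ha.1 (by omega)).2
            have h2 := (hpos2 b hb.1 (by omega)).2
            rw [← h1, ← h2, hab]
          rw [Finset.card_image_of_injOn hinj', Nat.card_Icc, Nat.card_Icc]
          omega
      have hu : σ (D + k) ≤ k := by
        have : D + k ∈ (Finset.Icc 1 k).image pos := by
          rw [hQ, Finset.mem_Icc]; omega
        rw [Finset.mem_image] at this
        obtain ⟨u, hu, hupos⟩ := this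
        rw [Finset.mem_Icc] at hu
        have := (hpos2 u hu.1 (by omega)).2
        rw [hupos] at this
        omega
      have hw' : k < σ (D + k + 1) := by
        by_contra hle
        push_neg at hle
        have h1 := hF1 (D + k + 1) (by omega) (by omega)
        have h2 := hpos_unique (σ (D + k + 1)) (D + k + 1) (by omega) (by omega) rfl
        have : D + k + 1 ∈ (Finset.Icc 1 k).image pos := by
          rw [Finset.mem_image]
          exact ⟨σ (D + k + 1), by rw [Finset.mem_Icc]; exact ⟨h1.1, hle⟩, h2⟩
        rw [hQ, Finset.mem_Icc] at this
        omega
      omega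
  -- closed forms for Lf and Mf
  have hMf : ∀ j, j ≤ N → Mf d σ j = j - D := by
    intro j hj
    have heq : (Finset.Icc 1 j).filter (fun l => σ l ≤ d' d) = Finset.Icc (D + 1) j := by
      ext l
      rw [Finset.mem_filter, Finset.mem_Icc, Finset.mem_Icc]
      rw [← hDdef]
      constructor
      · rintro ⟨⟨h1, h2⟩, h3⟩
        refine ⟨?_, h2⟩
        by_contra hle
        push_neg at hle
        have := htriv l h1 (by omega)
        omega
      · rintro ⟨h1, h2⟩
        have := hF1 l (by omega) (by omega)
        exact ⟨⟨by omega, h2⟩, this.2⟩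
    rw [Mf, heq, Nat.card_Icc]
    omega
  have hLf : ∀ j, j ≤ N → Lf d σ j = min j D := by
    intro j hj
    have heq : (Finset.Icc 1 j).filter (fun l => d' d < σ l) = Finset.Icc 1 (min j D) := by
      ext l
      rw [Finset.mem_filter, Finset.mem_Icc, Finset.mem_Icc]
      rw [← hDdef]
      constructor
      · rintro ⟨⟨h1, h2⟩, h3⟩
        refine ⟨h1, ?_⟩
        rcases le_or_gt l D with h | h
        · omega
        · have := hF1 l h (by omega)
          omega
      · rintro ⟨h1, h2⟩
        have := htriv l h1 (by omega)
        exact ⟨⟨h1, by omega⟩, this⟩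
    rw [Lf, heq, Nat.card_Icc]
    omega
  -- the filtered ascent set equals the (shifted) J set plus endpoint
  set Jσ : Finset ℕ := (Finset.Icc 1 (D - 1)).filter (fun j => Jmem d σ j) with hJdef
  have hJmem_iff : ∀ k, Jmem d σ k ↔ pos k < pos (k + 1) := by
    intro k
    simp only [Jmem, hposdef, ← hDdef, ← hNdef]
  have hFset : (ascSet d σ).filter (fun x => D < x)
      = insert (2 * D) (Jσ.image (fun k => k + D)) := by
    ext x
    rw [Finset.mem_filter, Finset.mem_insert, Finset.mem_image]
    rw [ascSet, Finset.mem_insert, Finset.mem_insert, Finset.mem_filter, Finset.mem_Icc]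
    rw [← hDdef, ← hNdef]
    constructor
    · rintro ⟨h1 | h2 | ⟨⟨hx1, hx2⟩, hasc⟩, hx⟩
      · omega
      · left; omega
      · right
        refine ⟨x - D, ?_, by omega⟩
        rw [hJdef, Finset.mem_filter, Finset.mem_Icc]
        refine ⟨⟨by omega, by omega⟩, ?_⟩
        rw [hJmem_iff]
        have hx' : D + (x - D) = x := by omega
        have := (heart (x - D) (by omega) (by omega)).mp (by rw [hx']; exact hasc)
        exact this
    · rintro (rfl | ⟨k, hk, rfl⟩)
      · exact ⟨Or.inr (Or.inl (by omega)), by omega⟩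
      · rw [hJdef, Finset.mem_filter, Finset.mem_Icc] at hk
        obtain ⟨⟨hk1, hk2⟩, hJ⟩ := hk
        rw [hJmem_iff] at hJ
        have hasc := (heart k hk1 (by omega)).mpr hJ
        refine ⟨Or.inr (Or.inr ⟨⟨by omega, by omega⟩, ?_⟩), by omega⟩
        rw [show k + D = D + k by omega]
        rw [show D + k + 1 = D + k + 1 from rfl]
        exact hasc
  -- Now the list computation
  unfold GMC
  congr 1
  set l : List ℕ := (ascSet d σ).sort (· ≤ ·) with hldef
  have hsort : l.Pairwise (· ≤ ·) := Finset.pairwise_sort _ _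
  have hnodup : l.Nodup := Finset.sort_nodup _ _
  have hmem_iff : ∀ x, x ∈ l ↔ x ∈ ascSet d σ := fun x => Finset.mem_sort _
  have hbound : ∀ x ∈ l, x ≤ N := by
    intro x hx
    rw [hmem_iff] at hx
    rw [ascSet, Finset.mem_insert, Finset.mem_insert, Finset.mem_filter, Finset.mem_Icc] at hx
    rw [← hDdef, ← hNdef] at hx
    rcases hx with h | h | h
    · omega
    · omega
    · omega
  have h0mem : 0 ∈ l := by
    rw [hmem_iff, ascSet]
    simp
  obtain ⟨c, t, hct⟩ : ∃ c t, l = c :: t := by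
    cases hl : l with
    | nil => rw [hl] at h0mem; simp at h0mem
    | cons a b => exact ⟨a, b, rfl⟩
  have hc0 : c = 0 := by
    rw [hct] at h0mem hsort
    rcases List.mem_cons.mp h0mem with h | h
    · omega
    · have := List.rel_of_pairwise_cons hsort h
      omega
  subst hc0
  -- step 1 : congruence f -> g'
  have step1 : consProd (fun a b => qbinom q⁻¹ (Lf d σ b - Mf d σ a) (Mf d σ b - Mf d σ a)) l
      = consProd (fun a b => qbinom q⁻¹ (N - max a D) (b - max a D)) l := by
    apply consProd_congr' _ _ l hsort
    intro a b ha hb hab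
    have hbN := hbound b hb
    have haN := hbound a ha
    rw [hMf a haN, hMf b hbN, hLf b hbN]
    rcases le_or_gt b D with hbD | hbD
    · rw [show b - D - (a - D) = 0 by omega, show b - max a D = 0 by omega,
        qbinom_zero', qbinom_zero']
    · rw [show min b D - (a - D) = N - max a D by omega,
        show b - D - (a - D) = b - max a D by omega]
  rw [step1, hct]
  -- step 2 : skip the prefix below D
  rw [consProd_skip q⁻¹ N D t (by rw [hct] at hsort; exact hsort.of_cons) 0 (by omega)]
  -- step 3 : identify the filtered list
  set L1 : List ℕ := t.filter (fun x => D < x) with hL1def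
  have hL1eq : L1 = l.filter (fun x => D < x) := by
    rw [hct, List.filter_cons_of_neg (by simp)]
  have hL1mem : ∀ x, x ∈ L1 ↔ x ∈ l ∧ D < x := by
    intro x
    rw [hL1eq, List.mem_filter]
    simp
  have hL1sorted : L1.Pairwise (· ≤ ·) := by
    rw [hL1eq]
    exact hsort.sublist (List.filter_sublist (l := l))
  have hL1nodup : L1.Nodup := by
    rw [hL1eq]
    exact hnodup.sublist (List.filter_sublist (l := l))
  have hL1bound : ∀ x ∈ L1, x ≤ N := fun x hx => hbound x ((hL1mem x).mp hx).1
  have hL1big : ∀ x ∈ L1, D < x := fun x hx => ((hL1mem x).mp hx).2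
  -- step 4 : stage-2 evaluation
  have hsorted2 : List.Pairwise (· ≤ ·) (D :: L1) :=
    List.pairwise_cons.mpr ⟨fun b hb => le_of_lt (hL1big b hb), hL1sorted⟩
  have hcongr2 : ∀ a b, a ∈ (D :: L1) → b ∈ (D :: L1) → a ≤ b →
      (fun a b => qbinom q⁻¹ (N - max a D) (b - max a D)) a b
        = (fun a b => qbinom q⁻¹ (N - a) (b - a)) a b := by
    intro a b ha _ _
    have hDa : D ≤ a := by
      rcases List.mem_cons.mp ha with h | h
      · omega
      · exact le_of_lt (hL1big a h)
    show qbinom q⁻¹ (N - max a D) (b - max a D) = qbinom q⁻¹ (N - a) (b - a)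
    rw [show max a D = a by omega]
  rw [consProd_congr' (fun a b => qbinom q⁻¹ (N - max a D) (b - max a D))
    (fun a b => qbinom q⁻¹ (N - a) (b - a)) (D :: L1) hsorted2 hcongr2]
  rw [consProd_qaux q⁻¹ N L1 D (by omega) hL1bound
    (chain_of_sorted_of_le L1 D hL1sorted (fun x hx => le_of_lt (hL1big x hx)))]
  rw [show N - D = D by omega]
  -- step 5 : identify the shifted list with the sorted J plus endpoint
  have step5 : L1.map (fun x => x - D) = Jσ.sort (· ≤ ·) ++ [D] := by
    refine (fun hp h1 h2 => List.Perm.eq_of_pairwise' (r := (· ≤ ·)) h1 h2 hp) ?_ ?_ ?_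
    · apply List.perm_of_nodup_nodup_toFinset_eq
      · apply List.Nodup.map_on _ hL1nodup
        intro x hx y hy hxy
        have := hL1big x hx
        have := hL1big y hy
        omega
      · apply List.Nodup.append (Finset.sort_nodup _ _) (by simp)
        intro x hx hx'
        rw [Finset.mem_sort] at hx
        rw [hJdef, Finset.mem_filter, Finset.mem_Icc] at hx
        simp at hx'
        omega
      · have hmap_fin : (L1.map (fun x => x - D)).toFinset = L1.toFinset.image (fun x => x - D) := by
          ext x
          simp
        rw [hmap_fin]
        have hL1fin : L1.toFinset = (ascSet d σ).filter (fun x => D < x) := by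
          ext x
          rw [List.mem_toFinset, hL1mem, hmem_iff, Finset.mem_filter]
        rw [hL1fin, hFset, Finset.image_insert, Finset.image_image]
        rw [show (2 * D) - D = D by omega]
        have himid : Jσ.image ((fun x => x - D) ∘ (fun k => k + D)) = Jσ := by
          rw [show ((fun x => x - D) ∘ (fun k => k + D)) = id by funext x; simp]
          exact Finset.image_id
        rw [himid]
        ext x
        rw [List.toFinset_append, Finset.mem_union, List.mem_toFinset, Finset.mem_sort,
          Finset.mem_insert]
        simp [or_comm]
    · apply List.Pairwise.map
      · intro a b hab
        exact Nat.sub_le_sub_right hab D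
      · exact hL1sorted
    · refine List.pairwise_append.mpr ⟨Finset.pairwise_sort _ _, by simp, ?_⟩
      intro a ha b hb
      rw [Finset.mem_sort] at ha
      rw [hJdef, Finset.mem_filter, Finset.mem_Icc] at ha
      simp at hb
      omega
  rw [step5]
  -- step 6 : strip the trailing endpoint
  rw [qmultinomAux_append_self q⁻¹ hq (Jσ.sort (· ≤ ·)) D]
  rw [qmultinom, hJdef]


end FreeNilpotent
end
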